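/- Let M > 1, c = 2M/(M + 1), and let k₀, Θ₁, Θ₂ be the 2π-periodic functions defined by: k₀(θ) = 1 for θ ∈ [0, cπ/2) ∪ [π, π + cπ/2) and k₀(θ) = M otherwise on [0, 2π); Θ₁(θ) = sin(c⁻¹θ − π/4) on [0, cπ/2), Θ₁(θ) = cos(c⁻¹M(θ − cπ/2) − π/4) on [cπ/2, π), Θ₁(θ) = −sin(c⁻¹(θ − π) − π/4) on [π, π + cπ/2), Θ₁(θ) = −cos(c⁻¹M(θ − π − cπ/2) − π/4) on [π + cπ/2, 2π); Θ₂(θ) = −cos(c⁻¹θ − π/4) on [0, cπ/2), Θ₂(θ) = sin(c⁻¹M(θ − cπ/2) − π/4) on [cπ/2, π), Θ₂(θ) = cos(c⁻¹(θ − π) − π/4) on [π, π + cπ/2), Θ₂(θ) = −sin(c⁻¹M(θ − π − cπ/2) − π/4) on [π + cπ/2, 2π). Define f₀(z) = |z|^{1/c} (Θ₁(arg z) + i Θ₂(arg z)) and μ₀(z) = ((1 − k₀(arg z))/(1 + k₀(arg z))) z z̄⁻¹ for z ≠ 0, where arg z ∈ [0, 2π). Then for every z ≠ 0 whose argument arg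 z ∈ [0, 2π) does not lie in {0, cπ/2, π, π + cπ/2}, f₀ is differentiable at z in the real sense and satisfies the Beltrami equation ∂̄f₀(z) = μ₀(z) ∂f₀(z). -/

import Mathlib

open Real Set

/-- The argument of a nonzero complex number, normalized to lie in `[0, 2π)`. -/
noncomputable def arg2pi (z : ℂ) : ℝ :=
  if 0 ≤ Complex.arg z then Complex.arg z else Complex.arg z + 2 * π

/-- The Wirtinger derivative `∂̄f(z) = (1/2)(∂f/∂x + i ∂f/∂y)` of a map `f : ℂ → ℂ`
viewed as real-differentiable at `z`. -/
noncomputable def wirtingerBar (f : ℂ → ℂ) (z : ℂ) : ℂ :=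
  (1 / 2) * (fderiv ℝ f z 1 + Complex.I * fderiv ℝ f z Complex.I)

/-- The Wirtinger derivative `∂f(z) = (1/2)(∂f/∂x − i ∂f/∂y)`. -/
noncomputable def wirtinger (f : ℂ → ℂ) (z : ℂ) : ℂ :=
  (1 / 2) * (fderiv ℝ f z 1 - Complex.I * fderiv ℝ f z Complex.I)

/-! On each of the four open sectors cut out by the rays `arg z ∈ {0, cπ/2, π, π + cπ/2}`,
`k₀ ≡ k` is constant and `f₀(w) = |w|^s e^{i(k s arg w + κ)}` with `s = 1/c`. Since
`log |w| = (log w + conj (log w))/2` and `arg w = (log w - conj (log w))/(2i)`, this is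
`exp (iκ + p log w + q conj (log w))` with `p = s(1+k)/2`, `q = s(1-k)/2`, whose Wirtinger
derivatives are `∂f = p f / z` and `∂̄f = q f / z̄`. Hence `∂̄f = (q/p)(z/z̄) ∂f` and
`q/p = (1-k)/(1+k)`. -/

open Filter Topology ComplexConjugate
open Complex (slitPlane conjCLE I)

theorem smul_one_add_smul_conj_apply (A B h : ℂ) :
    (A • (1 : ℂ →L[ℝ] ℂ) + B • conjCLE.toContinuousLinearMap) h = A * h + B * conj h := by
  simp

theorem wirtinger_eq_of_hasFDerivAt {f : ℂ → ℂ} {z A B : ℂ}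
    (hf : HasFDerivAt f (A • (1 : ℂ →L[ℝ] ℂ) + B • conjCLE.toContinuousLinearMap) z) :
    wirtinger f z = A := by
  rw [wirtinger, hf.fderiv, smul_one_add_smul_conj_apply, smul_one_add_smul_conj_apply, map_one,
    Complex.conj_I]
  linear_combination (B - A) / 2 * Complex.I_sq

theorem wirtingerBar_eq_of_hasFDerivAt {f : ℂ → ℂ} {z A B : ℂ}
    (hf : HasFDerivAt f (A • (1 : ℂ →L[ℝ] ℂ) + B • conjCLE.toContinuousLinearMap) z) :
    wirtingerBar f z = B := by
  rw [wirtingerBar, hf.fderiv, smul_one_add_smul_conj_apply, smul_one_add_smul_conj_apply, map_one,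
    Complex.conj_I]
  linear_combination (A - B) / 2 * Complex.I_sq

theorem hasFDerivAt_exp_log_conj_log {a p q z : ℂ} (hz : z ∈ slitPlane) :
    let g := fun w => Complex.exp (a + p * Complex.log w + q * conj (Complex.log w))
    HasFDerivAt g ((p * g z * z⁻¹) • (1 : ℂ →L[ℝ] ℂ) +
      (q * g z * (conj z)⁻¹) • conjCLE.toContinuousLinearMap) z := by
  have hlog := (Complex.hasDerivAt_log hz).hasFDerivAt.restrictScalars ℝ
  have hconj := conjCLE.toContinuousLinearMap.hasFDerivAt.comp z hlog
  refine (((hlog.const_mul p).const_add a).add (hconj.const_mul q)).cexp.congr_fderiv ?_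
  ext1 h
  rw [smul_one_add_smul_conj_apply]
  simp [mul_comm, mul_left_comm, mul_assoc]

theorem ofReal_rpow_norm_mul_exp_arg_eq {w : ℂ} (hw : w ≠ 0) (s t κ : ℝ) :
    ((‖w‖ ^ s : ℝ) : ℂ) * Complex.exp (((t * Complex.arg w + κ : ℝ) : ℂ) * I) =
      Complex.exp (κ * I + ((s + t) / 2 : ℝ) * Complex.log w +
        ((s - t) / 2 : ℝ) * conj (Complex.log w)) := by
  rw [Real.rpow_def_of_pos (norm_pos_iff.mpr hw), Complex.ofReal_exp, ← Complex.exp_add]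
  congr 1
  simp only [Complex.log, map_add, map_mul, Complex.conj_ofReal, Complex.conj_I]
  push_cast
  ring

theorem arg2pi_eq_ite (z : ℂ) :
    arg2pi z = if 0 ≤ z.im then Complex.arg z else Complex.arg z + 2 * π := by
  simp only [arg2pi, Complex.arg_nonneg_iff]

theorem arg2pi_nonneg (z : ℂ) : 0 ≤ arg2pi z := by
  unfold arg2pi
  split_ifs with h
  · exact h
  · linarith [Complex.neg_pi_lt_arg z]

theorem arg2pi_lt_two_pi (z : ℂ) : arg2pi z < 2 * π := by
  unfold arg2pi
  split_ifs with h
  · linarith [Complex.arg_le_pi z, pi_pos]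
  · linarith

theorem im_ne_zero_of_arg2pi_ne {z : ℂ} (h0 : arg2pi z ≠ 0) (hπ : arg2pi z ≠ π) :
    z.im ≠ 0 := by
  intro him
  rw [arg2pi_eq_ite, if_pos him.ge] at h0 hπ
  rcases le_or_gt 0 z.re with hre | hre
  · exact h0 (Complex.arg_eq_zero_iff.mpr ⟨hre, him⟩)
  · exact hπ (Complex.arg_eq_pi_iff.mpr ⟨hre, him⟩)

theorem arg2pi_eventuallyEq_arg_add {z : ℂ} (hz : z.im ≠ 0) :
    arg2pi =ᶠ[𝓝 z] fun w => Complex.arg w + (arg2pi z - Complex.arg z) := by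
  have hsign : ∀ᶠ w in 𝓝 z, (0 ≤ w.im ↔ 0 ≤ z.im) := by
    rcases hz.lt_or_gt with h | h
    · filter_upwards [Complex.continuous_im.continuousAt.eventually_lt continuousAt_const h]
        with w hw
      simp only [hw.not_ge, h.not_ge]
    · filter_upwards [continuousAt_const.eventually_lt Complex.continuous_im.continuousAt h]
        with w hw
      simp only [hw.le, h.le]
  filter_upwards [hsign] with w hw
  simp only [arg2pi_eq_ite, hw]
  split_ifs <;> ring

theorem continuousAt_arg2pi {z : ℂ} (hz : z.im ≠ 0) : ContinuousAt arg2pi z :=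
  ((Complex.continuousAt_arg (Complex.mem_slitPlane_iff.mpr (Or.inr hz))).add
    continuousAt_const).congr (arg2pi_eventuallyEq_arg_add hz).symm

theorem beltrami_of_sector {f : ℂ → ℂ} {Θ₁ Θ₂ : ℝ → ℝ} {s k κ lo hi : ℝ}
    (hf : ∀ w, f w = ((‖w‖ ^ s : ℝ) : ℂ) * ((Θ₁ (arg2pi w) : ℂ) + (Θ₂ (arg2pi w) : ℂ) * I))
    (hΘ : ∀ θ ∈ Ioo lo hi, Θ₁ θ = cos (k * s * θ + κ) ∧ Θ₂ θ = sin (k * s * θ + κ))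
    (hk : 1 + k ≠ 0) {z : ℂ} (hz : z.im ≠ 0) (hθ : arg2pi z ∈ Ioo lo hi) :
    DifferentiableAt ℝ f z ∧
      wirtingerBar f z = (((1 - k) / (1 + k) : ℝ) : ℂ) * z * (conj z)⁻¹ * wirtinger f z := by
  -- near `z`, `arg2pi` is `arg` plus a constant (`0` or `2π`), which is absorbed into the phase
  set κ' := k * s * (arg2pi z - Complex.arg z) + κ
  set p : ℂ := (((s + k * s) / 2 : ℝ) : ℂ)
  set q : ℂ := (((s - k * s) / 2 : ℝ) : ℂ)
  set g := fun w => Complex.exp (κ' * I + p * Complex.log w + q * conj (Complex.log w))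
  have hz0 : z ≠ 0 := fun h => hz (by simp [h])
  have hfg : f =ᶠ[𝓝 z] g := by
    filter_upwards [arg2pi_eventuallyEq_arg_add hz,
      (continuousAt_arg2pi hz).preimage_mem_nhds (isOpen_Ioo.mem_nhds hθ),
      eventually_ne_nhds hz0] with w hw hwθ hw0
    obtain ⟨h₁, h₂⟩ := hΘ _ hwθ
    rw [hf, h₁, h₂, Complex.ofReal_cos, Complex.ofReal_sin, ← Complex.exp_mul_I, hw]
    convert ofReal_rpow_norm_mul_exp_arg_eq hw0 s (k * s) κ' using 5
    ring
  have hL := (hasFDerivAt_exp_log_conj_log (a := κ' * I) (p := p) (q := q)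
    (Complex.mem_slitPlane_iff.mpr (Or.inr hz))).congr_of_eventuallyEq hfg
  refine ⟨hL.differentiableAt, ?_⟩
  rw [wirtingerBar_eq_of_hasFDerivAt hL, wirtinger_eq_of_hasFDerivAt hL]
  have hkC : (1 : ℂ) + k ≠ 0 := by exact_mod_cast hk
  have hcz : conj z ≠ 0 := (map_ne_zero _).mpr hz0
  simp only [p, q]
  push_cast
  field_simp

theorem sharp_example_beltrami_general (M c : ℝ) (hM : 1 < M) (hc : c = 2 * M / (M + 1))
    (Θ₁ Θ₂ k₀ : ℝ → ℝ)
    (hk₀1 : ∀ θ ∈ Ico 0 (c * π / 2) ∪ Ico π (π + c * π / 2), k₀ θ = 1)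
    (hk₀M : ∀ θ ∈ Ico (0 : ℝ) (2 * π),
      θ ∉ Ico 0 (c * π / 2) ∪ Ico π (π + c * π / 2) → k₀ θ = M)
    (hΘ₁a : ∀ θ ∈ Ico 0 (c * π / 2), Θ₁ θ = sin (c⁻¹ * θ - π / 4))
    (hΘ₁b : ∀ θ ∈ Ico (c * π / 2) π, Θ₁ θ = cos (c⁻¹ * M * (θ - c * π / 2) - π / 4))
    (hΘ₁c : ∀ θ ∈ Ico π (π + c * π / 2), Θ₁ θ = -sin (c⁻¹ * (θ - π) - π / 4))
    (hΘ₁d : ∀ θ ∈ Ico (π + c * π / 2) (2 * π),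
      Θ₁ θ = -cos (c⁻¹ * M * (θ - π - c * π / 2) - π / 4))
    (hΘ₂a : ∀ θ ∈ Ico 0 (c * π / 2), Θ₂ θ = -cos (c⁻¹ * θ - π / 4))
    (hΘ₂b : ∀ θ ∈ Ico (c * π / 2) π, Θ₂ θ = sin (c⁻¹ * M * (θ - c * π / 2) - π / 4))
    (hΘ₂c : ∀ θ ∈ Ico π (π + c * π / 2), Θ₂ θ = cos (c⁻¹ * (θ - π) - π / 4))
    (hΘ₂d : ∀ θ ∈ Ico (π + c * π / 2) (2 * π),
      Θ₂ θ = -sin (c⁻¹ * M * (θ - π - c * π / 2) - π / 4))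
    (f₀ μ₀ : ℂ → ℂ)
    (hf₀ : ∀ z : ℂ, f₀ z =
      (↑(‖z‖ ^ (1 / c)) : ℂ) * (↑(Θ₁ (arg2pi z)) + ↑(Θ₂ (arg2pi z)) * Complex.I))
    (hμ₀ : ∀ z : ℂ, μ₀ z =
      (((1 - k₀ (arg2pi z)) / (1 + k₀ (arg2pi z)) : ℝ) : ℂ) * z * (starRingEnd ℂ z)⁻¹) :
    ∀ z : ℂ, z ≠ 0 →
      arg2pi z ≠ 0 → arg2pi z ≠ c * π / 2 → arg2pi z ≠ π → arg2pi z ≠ π + c * π / 2 →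
      DifferentiableAt ℝ f₀ z ∧ wirtingerBar f₀ z = μ₀ z * wirtinger f₀ z := by
  intro z _ h0 hA hπ hB
  have hc0 : 0 < c := by rw [hc]; positivity
  have hc2 : c < 2 := by rw [hc, div_lt_iff₀ (by linarith)]; linarith
  have hAπ : c * π / 2 < π := by nlinarith [pi_pos]
  have hθ0 := (arg2pi_nonneg z).lt_of_ne' h0
  have hθ2 := arg2pi_lt_two_pi z
  have him := im_ne_zero_of_arg2pi_ne h0 hπ
  have hM1 : 1 + M ≠ 0 := by linarith
  rw [hμ₀]
  rcases hA.lt_or_gt with h1 | h1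
  · rw [hk₀1 _ (Or.inl ⟨hθ0.le, h1⟩)]
    refine beltrami_of_sector (κ := -(3 * π / 4)) hf₀ (fun θ hθ => ?_) (by norm_num) him ⟨hθ0, h1⟩
    rw [hΘ₁a θ (Ioo_subset_Ico_self hθ), hΘ₂a θ (Ioo_subset_Ico_self hθ),
      ← cos_sub_pi_div_two (c⁻¹ * θ - π / 4), ← sin_sub_pi_div_two]
    constructor <;> congr 1 <;> ring
  rcases hπ.lt_or_gt with h2 | h2
  · rw [hk₀M _ ⟨hθ0.le, hθ2⟩ (by rintro (⟨-, h⟩ | ⟨h, -⟩) <;> linarith)]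
    refine beltrami_of_sector (κ := -(M * π / 2) - π / 4) hf₀ (fun θ hθ => ?_) hM1 him ⟨h1, h2⟩
    rw [hΘ₁b θ (Ioo_subset_Ico_self hθ), hΘ₂b θ (Ioo_subset_Ico_self hθ)]
    constructor <;> congr 1 <;> field_simp <;> ring
  rcases hB.lt_or_gt with h3 | h3
  · rw [hk₀1 _ (Or.inr ⟨h2.le, h3⟩)]
    refine beltrami_of_sector (κ := π / 4 - c⁻¹ * π) hf₀ (fun θ hθ => ?_) (by norm_num) him ⟨h2, h3⟩
    rw [hΘ₁c θ (Ioo_subset_Ico_self hθ), hΘ₂c θ (Ioo_subset_Ico_self hθ), ← cos_add_pi_div_two,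
      ← sin_add_pi_div_two (c⁻¹ * (θ - π) - π / 4)]
    constructor <;> congr 1 <;> ring
  · rw [hk₀M _ ⟨hθ0.le, hθ2⟩ (by rintro (⟨-, h⟩ | ⟨-, h⟩) <;> linarith)]
    refine beltrami_of_sector (κ := π - c⁻¹ * M * π - M * π / 2 - π / 4) hf₀ (fun θ hθ => ?_) hM1
      him ⟨h3, hθ2⟩
    rw [hΘ₁d θ (Ioo_subset_Ico_self hθ), hΘ₂d θ (Ioo_subset_Ico_self hθ), ← cos_add_pi,
      ← sin_add_pi]
    constructor <;> congr 1 <;> field_simp <;> ring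

/-- Let `M > 1`, `c = 2M/(M+1)`, and let `k₀, Θ₁, Θ₂` be the
`2π`-periodic functions given by the stated piecewise formulas on `[0, 2π)`.
Define `f₀(z) = |z|^{1/c}(Θ₁(arg z) + iΘ₂(arg z))` and
`μ₀(z) = ((1 − k₀(arg z))/(1 + k₀(arg z))) z z̄⁻¹`, with `arg z ∈ [0, 2π)`.
Then for every `z ≠ 0` whose argument does not lie in `{0, cπ/2, π, π + cπ/2}`,
`f₀` is real-differentiable at `z` and `∂̄f₀(z) = μ₀(z) ∂f₀(z)`. -/
theorem sharp_example_beltrami (M c : ℝ) (hM : 1 < M) (hc : c = 2 * M / (M + 1))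
    (Θ₁ Θ₂ k₀ : ℝ → ℝ)
    (hΘ₁per : Function.Periodic Θ₁ (2 * π))
    (hΘ₂per : Function.Periodic Θ₂ (2 * π))
    (hk₀per : Function.Periodic k₀ (2 * π))
    (hk₀1 : ∀ θ ∈ Ico 0 (c * π / 2) ∪ Ico π (π + c * π / 2), k₀ θ = 1)
    (hk₀M : ∀ θ ∈ Ico (0 : ℝ) (2 * π),
      θ ∉ Ico 0 (c * π / 2) ∪ Ico π (π + c * π / 2) → k₀ θ = M)
    (hΘ₁a : ∀ θ ∈ Ico 0 (c * π / 2), Θ₁ θ = sin (c⁻¹ * θ - π / 4))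
    (hΘ₁b : ∀ θ ∈ Ico (c * π / 2) π, Θ₁ θ = cos (c⁻¹ * M * (θ - c * π / 2) - π / 4))
    (hΘ₁c : ∀ θ ∈ Ico π (π + c * π / 2), Θ₁ θ = -sin (c⁻¹ * (θ - π) - π / 4))
    (hΘ₁d : ∀ θ ∈ Ico (π + c * π / 2) (2 * π),
      Θ₁ θ = -cos (c⁻¹ * M * (θ - π - c * π / 2) - π / 4))
    (hΘ₂a : ∀ θ ∈ Ico 0 (c * π / 2), Θ₂ θ = -cos (c⁻¹ * θ - π / 4))
    (hΘ₂b : ∀ θ ∈ Ico (c * π / 2) π, Θ₂ θ = sin (c⁻¹ * M * (θ - c * π / 2) - π / 4))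
    (hΘ₂c : ∀ θ ∈ Ico π (π + c * π / 2), Θ₂ θ = cos (c⁻¹ * (θ - π) - π / 4))
    (hΘ₂d : ∀ θ ∈ Ico (π + c * π / 2) (2 * π),
      Θ₂ θ = -sin (c⁻¹ * M * (θ - π - c * π / 2) - π / 4))
    (f₀ μ₀ : ℂ → ℂ)
    (hf₀ : ∀ z : ℂ, f₀ z =
      (↑(‖z‖ ^ (1 / c)) : ℂ) * (↑(Θ₁ (arg2pi z)) + ↑(Θ₂ (arg2pi z)) * Complex.I))
    (hμ₀ : ∀ z : ℂ, μ₀ z =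
      (((1 - k₀ (arg2pi z)) / (1 + k₀ (arg2pi z)) : ℝ) : ℂ) * z * (starRingEnd ℂ z)⁻¹) :
    ∀ z : ℂ, z ≠ 0 →
      arg2pi z ≠ 0 → arg2pi z ≠ c * π / 2 → arg2pi z ≠ π → arg2pi z ≠ π + c * π / 2 →
      DifferentiableAt ℝ f₀ z ∧ wirtingerBar f₀ z = μ₀ z * wirtinger f₀ z :=
  sharp_example_beltrami_general M c hM hc Θ₁ Θ₂ k₀ hk₀1 hk₀M hΘ₁a hΘ₁b hΘ₁c hΘ₁d hΘ₂a hΘ₂b hΘ₂c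
    hΘ₂d f₀ μ₀ hf₀ hμ₀
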